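/- Let E be a divisible effect algebra with compression base (J_p)_{p∈P}, and let (G, u) be its universal group with the uniquely extended compression base (J̃_p)_{p∈P}. If E has the b-comparability property, then G has general comparability. Conversely, if E is archimedean and G has general comparability, then E has the b-comparability property. -/

import Mathlib

/- Common definitions: effect algebras, compression bases, spectrality -/

attribute [local instance 0] Classical.propDecidable

universe u

structure EffectAlgebra (E : Type u) where
  padd : E → E → Option E
  zero : E
  one : E
  comm : ∀ a b, padd a b = padd b a
  assoc : ∀ a b c ab abc, padd a b = some ab → padd ab c = some abc →
      ∃ bc, padd b c = some bc ∧ padd a bc = some abc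
  orth_exists : ∀ a, ∃ x, padd a x = some one
  orth_unique : ∀ a x y, padd a x = some one → padd a y = some one → x = y
  add_one : ∀ a b, padd a one = some b → a = zero

namespace EffectAlgebra

variable {E : Type u} (EA : EffectAlgebra E)

/-- `a ⊥ b` and `a ⊕ b = c`. -/
def le (a b : E) : Prop := ∃ c, EA.padd a c = some b

/-- the orthosupplement `a'`. -/
noncomputable def compl (a : E) : E := (EA.orth_exists a).choose

/-- `b ⊖ a` (the element `c` with `a ⊕ c = b`, when it exists). -/
noncomputable def osub (b a : E) : E :=
  if h : ∃ c, EA.padd a c = some b then h.choose else EA.zero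

/-- the value of `a ⊕ b` (defaulting to `0` when undefined). -/
noncomputable def oplusD (a b : E) : E := (EA.padd a b).getD EA.zero

def IsSharp (a : E) : Prop := ∀ x, EA.le x a → EA.le x (EA.compl a) → x = EA.zero

/-- sub-effect algebra. -/
def SubEA (P : Set E) : Prop :=
  EA.zero ∈ P ∧ EA.one ∈ P ∧ (∀ a ∈ P, EA.compl a ∈ P) ∧
    ∀ a ∈ P, ∀ b ∈ P, ∀ c, EA.padd a b = some c → c ∈ P

/-- Mackey compatibility: `a = a₁ ⊕ c`, `b = b₁ ⊕ c` with `a₁ ⊕ b₁ ⊕ c` defined. -/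
def Mackey (a b : E) : Prop :=
  ∃ a1 b1 c d e, EA.padd a1 b1 = some d ∧ EA.padd d c = some e ∧
    EA.padd a1 c = some a ∧ EA.padd b1 c = some b

def Additive (J : E → E) : Prop :=
  ∀ a b c, EA.padd a b = some c → EA.padd (J a) (J b) = some (J c)

def Retraction (J : E → E) : Prop :=
  EA.Additive J ∧ ∀ a, EA.le a (J EA.one) → J a = a

def Compression (J : E → E) : Prop :=
  EA.Retraction J ∧ ∀ a, (J a = EA.zero ↔ EA.le a (EA.compl (J EA.one)))

/-- `I` is a supplement of `J`: `Ker J = ran I` and `Ker I = ran J`. -/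
def Supplement (I J : E → E) : Prop :=
  (∀ a, J a = EA.zero ↔ ∃ b, I b = a) ∧ (∀ a, I a = EA.zero ↔ ∃ b, J b = a)

/-- the `n`-fold sum `n·a`, when defined. -/
def nsmulE : ℕ → E → Option E
  | 0, _ => some EA.zero
  | n + 1, a => (nsmulE n a).bind fun b => EA.padd a b

def ArchimedeanEA : Prop :=
  ∀ a : E, (∀ n : ℕ, ∃ b, EA.nsmulE n a = some b) → a = EA.zero

/-- a state on an effect algebra. -/
def IsState (s : E → ℝ) : Prop :=
  s EA.one = 1 ∧ (∀ a, 0 ≤ s a ∧ s a ≤ 1) ∧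
    ∀ a b c, EA.padd a b = some c → s c = s a + s b

noncomputable def partialSum (f : ℕ → E) : ℕ → E
  | 0 => EA.zero
  | n + 1 => EA.oplusD (partialSum f n) (f n)

/-- σ-additivity of a state: if all partial sums of an orthogonal sequence are defined
and the orthosum (= supremum of the partial sums) exists, the state is countably additive. -/
def SigmaAdditive (s : E → ℝ) : Prop :=
  ∀ f : ℕ → E, ∀ b : E,
    (∀ n, ∃ c, EA.padd (EA.partialSum f n) (f n) = some c) →
    (∀ n, EA.le (EA.partialSum f n) b) →
    (∀ c, (∀ n, EA.le (EA.partialSum f n) c) → EA.le b c) →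
    Filter.Tendsto (fun n => ∑ i ∈ Finset.range n, s (f i)) Filter.atTop (nhds (s b))

/-- A compression base: a family of compressions indexed by a sub-effect algebra `P`
such that each `p ∈ P` is the focus of `J p`, and Mackey compatible projections
compose to a projection. -/
structure CompressionBase {E : Type u} (EA : EffectAlgebra E) where
  P : Set E
  J : E → E → E
  sub : EA.SubEA P
  compr : ∀ p ∈ P, EA.Compression (J p)
  focus : ∀ p ∈ P, J p EA.one = p
  mackey : ∀ p ∈ P, ∀ q ∈ P, EA.Mackey p q → ∃ r ∈ P, J p ∘ J q = J r

variable (CB : CompressionBase EA)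

/-- `a ∈ C(p)`:  `a = J_p(a) ⊕ J_{p'}(a)`. -/
def inC (a p : E) : Prop :=
  EA.padd (CB.J p a) (CB.J (EA.compl p) a) = some a

/-- `PC(a) = {p ∈ P : a ∈ C(p)}`. -/
def PC (a : E) : Set E := {p | p ∈ CB.P ∧ inC EA CB a p}

/-- the bicommutant `P(a)`. -/
def bicomm (a : E) : Set E :=
  {p | p ∈ PC EA CB a ∧ ∀ q ∈ PC EA CB a, inC EA CB p q}

/-- `PC(A)` for a set `A ⊆ E`. -/
def PCset (A : Set E) : Set E := {p | p ∈ CB.P ∧ ∀ a ∈ A, inC EA CB a p}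

/-- `P(Q) = PC(PC(Q) ∪ Q)`. -/
def Pset (Q : Set E) : Set E := PCset EA CB (PCset EA CB Q ∪ Q)

/-- `P_≤(e,f)`. -/
def Ple (e f : E) : Set E :=
  {p | p ∈ Pset EA CB {e, f} ∧ EA.le (CB.J p e) (CB.J p f) ∧
    EA.le (CB.J (EA.compl p) f) (CB.J (EA.compl p) e)}

/-- a Boolean subalgebra of `P`: a sub-effect algebra of `E` contained in `P`
whose elements are pairwise Mackey compatible, with witnesses inside. -/
def BooleanSub (B : Set E) : Prop :=
  B ⊆ CB.P ∧ EA.SubEA B ∧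
    ∀ p ∈ B, ∀ q ∈ B, ∃ p1 ∈ B, ∃ q1 ∈ B, ∃ c ∈ B, ∃ d e,
      EA.padd p1 q1 = some d ∧ EA.padd d c = some e ∧
      EA.padd p1 c = some p ∧ EA.padd q1 c = some q

/-- `a` is a b-element with associated Boolean subalgebra `B`. -/
def IsBElementWith (a : E) (B : Set E) : Prop :=
  BooleanSub EA CB B ∧ ∀ p ∈ CB.P, (inC EA CB a p ↔ ∀ b ∈ B, inC EA CB b p)

def IsBElement (a : E) : Prop := ∃ B, IsBElementWith EA CB a B

def BProperty : Prop := ∀ a : E, IsBElement EA CB a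

/-- commuting of b-elements: `e C f` iff `P(e) ↔ P(f)`. -/
def CommuteEl (e f : E) : Prop :=
  ∀ p ∈ bicomm EA CB e, ∀ q ∈ bicomm EA CB f, EA.Mackey p q

def BComparability : Prop :=
  BProperty EA CB ∧ ∀ e f : E, CommuteEl EA CB e f → (Ple EA CB e f).Nonempty

def IsProjCover (a p : E) : Prop :=
  p ∈ CB.P ∧ ∀ q ∈ CB.P, (EA.le a q ↔ EA.le p q)

def ProjCoverProp : Prop := ∀ a : E, ∃ p, IsProjCover EA CB a p

def Spectral : Prop := ProjCoverProp EA CB ∧ BComparability EA CB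

/-- a block of `P`: a maximal set of pairwise Mackey compatible projections. -/
def IsBlock (B : Set E) : Prop :=
  B ⊆ CB.P ∧ (∀ p ∈ B, ∀ q ∈ B, EA.Mackey p q) ∧
    ∀ B' : Set E, B' ⊆ CB.P → (∀ p ∈ B', ∀ q ∈ B', EA.Mackey p q) → B ⊆ B' → B' = B

/-- the C-block `C(B)`. -/
def Cblock (B : Set E) : Set E := {a | ∀ p ∈ B, inC EA CB a p}

/-- `(f − e)_+` (the positive part, defined when `P_≤(e,f)` is nonempty). -/
noncomputable def posPart (e f : E) : E :=
  if h : (Ple EA CB e f).Nonempty then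
    EA.osub (CB.J h.some f) (CB.J h.some e)
  else EA.zero

noncomputable def projCover (a : E) : E :=
  if h : ∃ p, IsProjCover EA CB a p then h.choose else EA.zero

def IsMeetP (p q m : E) : Prop :=
  m ∈ CB.P ∧ EA.le m p ∧ EA.le m q ∧ ∀ s ∈ CB.P, EA.le s p → EA.le s q → EA.le s m

/-- `p ∧ q` in `P`. -/
noncomputable def pmeet (p q : E) : E :=
  if h : ∃ m, IsMeetP EA CB p q m then h.choose else EA.zero

/-- infimum of a set of projections in `P`. -/
def IsInfP (S : Set E) (m : E) : Prop :=
  m ∈ CB.P ∧ (∀ s ∈ S, EA.le m s) ∧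
    ∀ t ∈ CB.P, (∀ s ∈ S, EA.le t s) → EA.le t m

/-! Relative (to a projection `q`, i.e. computed in the interval `[0,q]`) notions. -/

def Pq (q : E) : Set E := {p | p ∈ CB.P ∧ EA.le p q}

def inCq (q a p : E) : Prop :=
  EA.padd (CB.J p a) (CB.J (EA.osub q p) a) = some a

def PCq (q a : E) : Set E := {p | p ∈ Pq EA CB q ∧ inCq EA CB q a p}

def bicommq (q a : E) : Set E :=
  {p | p ∈ PCq EA CB q a ∧ ∀ r ∈ PCq EA CB q a, inCq EA CB q p r}

def PCsetq (q : E) (A : Set E) : Set E :=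
  {p | p ∈ Pq EA CB q ∧ ∀ a ∈ A, inCq EA CB q a p}

def Psetq (q : E) (Q : Set E) : Set E := PCsetq EA CB q (PCsetq EA CB q Q ∪ Q)

def Pleq (q e f : E) : Set E :=
  {p | p ∈ Psetq EA CB q {e, f} ∧ EA.le (CB.J p e) (CB.J p f) ∧
    EA.le (CB.J (EA.osub q p) f) (CB.J (EA.osub q p) e)}

noncomputable def posPartq (q e f : E) : E :=
  if h : (Pleq EA CB q e f).Nonempty then
    EA.osub (CB.J h.some f) (CB.J h.some e)
  else EA.zero

def IsProjCoverq (q a p : E) : Prop :=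
  p ∈ Pq EA CB q ∧ ∀ s ∈ Pq EA CB q, (EA.le a s ↔ EA.le p s)

noncomputable def projCoverq (q a : E) : E :=
  if h : ∃ p, IsProjCoverq EA CB q a p then h.choose else EA.zero

def Mackeyq (q a b : E) : Prop :=
  ∃ a1 b1 c d e, EA.padd a1 b1 = some d ∧ EA.padd d c = some e ∧ EA.le e q ∧
    EA.padd a1 c = some a ∧ EA.padd b1 c = some b

def SubEAq (q : E) (F : Set E) : Prop :=
  EA.zero ∈ F ∧ q ∈ F ∧ (∀ x ∈ F, EA.osub q x ∈ F) ∧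
    ∀ x ∈ F, ∀ y ∈ F, ∀ z, EA.padd x y = some z → EA.le z q → z ∈ F

def BooleanSubq (q : E) (B : Set E) : Prop :=
  B ⊆ Pq EA CB q ∧ SubEAq EA q B ∧
    ∀ p ∈ B, ∀ r ∈ B, ∃ p1 ∈ B, ∃ r1 ∈ B, ∃ c ∈ B, ∃ d e,
      EA.padd p1 r1 = some d ∧ EA.padd d c = some e ∧ EA.le e q ∧
      EA.padd p1 c = some p ∧ EA.padd r1 c = some r

def IsBElementq (q a : E) : Prop :=
  ∃ B, BooleanSubq EA CB q B ∧
    ∀ p ∈ Pq EA CB q, (inCq EA CB q a p ↔ ∀ b ∈ B, inCq EA CB q b p)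

def BPropertyq (q : E) : Prop := ∀ a : E, EA.le a q → IsBElementq EA CB q a

def CommuteElq (q e f : E) : Prop :=
  ∀ p ∈ bicommq EA CB q e, ∀ r ∈ bicommq EA CB q f, Mackeyq EA q p r

def BComparabilityq (q : E) : Prop :=
  BPropertyq EA CB q ∧ ∀ e f : E, EA.le e q → EA.le f q →
    CommuteElq EA CB q e f → (Pleq EA CB q e f).Nonempty

/-! The binary spectral resolution. -/

/-- `λ(w) = Σ_j w_j 2^{-j}` (head of the list is the first digit). -/
def lamOf : List Bool → ℚ
  | [] => 0
  | b :: t => ((if b then 1 else 0) + lamOf t) / 2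

/-- all binary strings of length `n`, in lexicographic order. -/
def allStrings : ℕ → List (List Bool)
  | 0 => [[]]
  | n + 1 => (allStrings n).flatMap fun w => [w ++ [false], w ++ [true]]

noncomputable def listSum (l : List E) : E :=
  l.foldl (fun acc x => EA.oplusD acc x) EA.zero

/-- the families `(u_w, c_w)`; the binary string is given in reversed order
(head of the list is the last digit). -/
noncomputable def ucAux (a : E) : List Bool → E × E
  | [] => (projCover EA CB a, a)
  | bit :: t =>
      let p := ucAux a t
      let q := p.1
      let cw := p.2
      let cw' := EA.osub q cw
      let d := posPartq EA CB q cw' cw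
      let u0 := pmeet EA CB (EA.osub q (projCoverq EA CB q d)) q
      if bit then (pmeet EA CB q (EA.compl u0), d)
      else (u0, EA.oplusD (CB.J u0 cw) (CB.J u0 cw))

noncomputable def uw (a : E) (w : List Bool) : E := (ucAux EA CB a w.reverse).1

noncomputable def cw (a : E) (w : List Bool) : E := (ucAux EA CB a w.reverse).2

/-- the binary spectral projection `p_{a,λ(w1)}`. -/
noncomputable def pbin (a : E) (w : List Bool) : E :=
  listSum EA (EA.compl (projCover EA CB a) ::
    (((allStrings (w.length + 1)).filter
        fun v => lamOf v ≤ lamOf (w ++ [false])).map (uw EA CB a)))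

def Dyadic01 (x : ℚ) : Prop := ∃ n k : ℕ, (k : ℚ) ≤ 2 ^ n ∧ x = (k : ℚ) / 2 ^ n

/-- the binary spectral resolution `p_{a,λ}`, for dyadic rationals `λ ∈ [0,1]`. -/
noncomputable def pdyad (a : E) (x : ℚ) : E :=
  if x ≤ 0 then EA.compl (projCover EA CB a)
  else if 1 ≤ x then EA.one
  else if h : ∃ w : List Bool, lamOf (w ++ [true]) = x then pbin EA CB a h.choose
  else EA.zero

/-- the rational spectral resolution `p_{a,λ} = ⋀_{μ > λ, μ dyadic} p_{a,μ}`. -/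
noncomputable def ratRes (a : E) (x : ℚ) : E :=
  if h : ∃ m, IsInfP EA CB {y | ∃ μ, Dyadic01 μ ∧ x < μ ∧ y = pdyad EA CB a μ} m
  then h.choose else EA.zero

/-- the partial maps `f_0(b) = 2b`, `f_1(b) = (2b')'` computed in `[0,uu]`. -/
noncomputable def fstep (uu b : E) (bit : Bool) : Option E :=
  if bit then
    (if EA.le (EA.osub uu b) b
      then some (EA.osub uu (EA.oplusD (EA.osub uu b) (EA.osub uu b))) else none)
  else
    (if EA.le b (EA.osub uu b) then some (EA.oplusD b b) else none)

/-- `f_w = f_{w_n} ∘ ⋯ ∘ f_{w_1}`, computed in `[0,uu]`, as a partial map. -/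
noncomputable def fword (uu : E) (w : List Bool) (b : E) : Option E :=
  w.foldl (fun ob bit => ob.bind fun x => fstep EA uu x bit) (some b)

end EffectAlgebra

namespace EffectAlgebra

/-- `u` is an order unit of the partially ordered abelian group `G`. -/
def OrderUnit {G : Type u} [AddCommGroup G] [PartialOrder G] (unit : G) : Prop :=
  0 ≤ unit ∧ ∀ g : G, ∃ n : ℕ, g ≤ n • unit

/-- the Riesz interpolation property. -/
def RieszInterp (G : Type u) [AddCommGroup G] [PartialOrder G] : Prop :=
  ∀ a b c d : G, a ≤ c → a ≤ d → b ≤ c → b ≤ d → ∃ x, a ≤ x ∧ b ≤ x ∧ x ≤ c ∧ x ≤ d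

/-- `p ∈ [0,u]` is sharp: `p ∧ (u − p) = 0`. -/
def SharpG {G : Type u} [AddCommGroup G] [PartialOrder G] (unit p : G) : Prop :=
  0 ≤ p ∧ p ≤ unit ∧ ∀ x : G, 0 ≤ x → x ≤ p → x ≤ unit - p → x = 0

/-- membership in the convex subgroup `G_p` generated by `p`. -/
def inGp {G : Type u} [AddCommGroup G] [PartialOrder G] (p g : G) : Prop :=
  ∃ n : ℕ, -(n • p) ≤ g ∧ g ≤ n • p

/-- `U` is the projection `Ũ_p` of `G` onto `G_p` with kernel `G_{p'}`. -/
def IsIdealProj {G : Type u} [AddCommGroup G] [PartialOrder G]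
    (unit p : G) (U : G → G) : Prop :=
  (∀ x y, U (x + y) = U x + U y) ∧ (∀ x y : G, x ≤ y → U x ≤ U y) ∧
    (∀ g, inGp p (U g)) ∧ (∀ g, inGp (unit - p) (g - U g)) ∧
    (∀ g, inGp p g → U g = g)

end EffectAlgebra

namespace EffectAlgebra

variable {E : Type u} {G : Type u} [AddCommGroup G] [PartialOrder G]

/-- `g ∈ C(p)` in the group `G` with the extended compression base `Jt`. -/
def inCG (EA : EffectAlgebra E) (Jt : E → G → G) (g : G) (p : E) : Prop :=
  g = Jt p g + Jt (EA.compl p) g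

def PCG (EA : EffectAlgebra E) (CB : CompressionBase EA) (Jt : E → G → G)
    (g : G) : Set E :=
  {p | p ∈ CB.P ∧ inCG EA Jt g p}

/-- the bicommutant `P(g)` of `g ∈ G`. -/
def bicommG (EA : EffectAlgebra E) (CB : CompressionBase EA) (Jt : E → G → G)
    (φ : E → G) (g : G) : Set E :=
  {p | p ∈ PCG EA CB Jt g ∧ ∀ q ∈ PCG EA CB Jt g, inCG EA Jt (φ p) q}

/-- general comparability of `(G,u)` with the extended compression base `Jt`. -/
def GenCompG (EA : EffectAlgebra E) (CB : CompressionBase EA) (Jt : E → G → G)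
    (φ : E → G) : Prop :=
  ∀ g : G, ∃ p ∈ bicommG EA CB Jt φ g, Jt (EA.compl p) g ≤ 0 ∧ 0 ≤ Jt p g

/-- `rick` is a Rickart mapping for `(G,u)` with the compression base `Jt`. -/
def RickartMapG (EA : EffectAlgebra E) (CB : CompressionBase EA) (Jt : E → G → G)
    (rick : G → E) : Prop :=
  ∀ g : G, rick g ∈ CB.P ∧ ∀ p ∈ CB.P,
    (EA.le p (rick g) ↔ (inCG EA Jt g p ∧ Jt p g = 0))

end EffectAlgebra


/-!
Divisibility makes every `g ∈ G` of the form `n • (φ e - φ (1/2))`, and `1/2` commutes with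
every projection, so a projection in `P_≤(1/2, e)` witnesses general comparability for `g`.

Conversely, general comparability for `φ f - φ e` yields `P_≤(e, f)` as soon as every `a` is a
b-element with `B(a) = P(a)`. The point is that a projection `q` commuting with `P(a)` commutes
with `a`: projections `p_k ∈ P(a)` witnessing general comparability for `m • φ a - k • u`
(`k = 0, …, m`) form a decreasing chain, and summation by parts squeezes `m • φ a` between two
sums of the `φ p_k` that differ by at most `u`. These sums are fixed by `J̃_q + J̃_{q'}`, so
`m • (J̃_q (φ a) + J̃_{q'} (φ a) - φ a)` lies between `-u` and `u` for all `m`, and since `E` is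
archimedean (which general comparability transfers to `G`) this element is `0`.
-/

theorem abel_summation_bounds {G : Type*} [AddCommGroup G] [PartialOrder G]
    [CovariantClass G G (· + ·) (· ≤ ·)] (T w : ℕ → G) (m : ℕ)
    (h : ∀ k < m, k • (w k - w (k + 1)) ≤ T k - T (k + 1) ∧
      T k - T (k + 1) ≤ (k + 1) • (w k - w (k + 1))) :
    ∑ j ∈ Finset.range m, w (j + 1) + (T m - m • w m) ≤ T 0 ∧
      T 0 ≤ ∑ j ∈ Finset.range m, w j + (T m - m • w m) := by
  induction m with
  | zero => simp
  | succ m ih =>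
    obtain ⟨ih1, ih2⟩ := ih fun k hk => h k (by omega)
    obtain ⟨h1, h2⟩ := h m (by omega)
    constructor
    · calc ∑ j ∈ Finset.range (m + 1), w (j + 1) + (T (m + 1) - (m + 1) • w (m + 1))
          = ∑ j ∈ Finset.range m, w (j + 1) + (T m - m • w m)
            - ((T m - T (m + 1)) - m • (w m - w (m + 1))) := by
            rw [Finset.sum_range_succ, succ_nsmul, nsmul_sub]; abel
        _ ≤ ∑ j ∈ Finset.range m, w (j + 1) + (T m - m • w m) :=
            sub_le_self _ (sub_nonneg.mpr h1)
        _ ≤ T 0 := ih1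
    · calc T 0 ≤ ∑ j ∈ Finset.range m, w j + (T m - m • w m) := ih2
        _ ≤ ∑ j ∈ Finset.range m, w j + (T m - m • w m)
            + ((m + 1) • (w m - w (m + 1)) - (T m - T (m + 1))) :=
            le_add_of_nonneg_right (sub_nonneg.mpr h2)
        _ = ∑ j ∈ Finset.range (m + 1), w j + (T (m + 1) - (m + 1) • w (m + 1)) := by
            rw [Finset.sum_range_succ, succ_nsmul, succ_nsmul, nsmul_sub]; abel

namespace EffectAlgebra

variable {E : Type u} {EA : EffectAlgebra E}

theorem padd_compl (EA : EffectAlgebra E) (a : E) : EA.padd a (EA.compl a) = some EA.one :=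
  (EA.orth_exists a).choose_spec

theorem compl_one (EA : EffectAlgebra E) : EA.compl EA.one = EA.zero :=
  EA.add_one _ _ (by rw [EA.comm]; exact EA.padd_compl EA.one)

theorem Mackey.symm {p q : E} (h : EA.Mackey p q) : EA.Mackey q p := by
  obtain ⟨a1, b1, c, d, e, h1, h2, h3, h4⟩ := h
  exact ⟨b1, a1, c, d, e, EA.comm b1 a1 ▸ h1, h2, h4, h3⟩

namespace CompressionBase

variable (CB : CompressionBase EA) {p : E}

theorem zero_mem : EA.zero ∈ CB.P := CB.sub.1

theorem one_mem : EA.one ∈ CB.P := CB.sub.2.1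

theorem compl_mem (hp : p ∈ CB.P) : EA.compl p ∈ CB.P := CB.sub.2.2.1 p hp

theorem padd_mem {q r : E} (hp : p ∈ CB.P) (hq : q ∈ CB.P) (h : EA.padd p q = some r) :
    r ∈ CB.P :=
  CB.sub.2.2.2 p hp q hq r h

theorem J_one (hp : p ∈ CB.P) : CB.J p EA.one = p := CB.focus p hp

theorem J_of_le (hp : p ∈ CB.P) {a : E} (h : EA.le a p) : CB.J p a = a :=
  (CB.compr p hp).1.2 a (by rwa [CB.J_one hp])

theorem J_eq_zero_iff (hp : p ∈ CB.P) {a : E} : CB.J p a = EA.zero ↔ EA.le a (EA.compl p) := by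
  rw [(CB.compr p hp).2 a, CB.J_one hp]

theorem J_padd (hp : p ∈ CB.P) {a b c : E} (h : EA.padd a b = some c) :
    EA.padd (CB.J p a) (CB.J p b) = some (CB.J p c) :=
  (CB.compr p hp).1.1 a b c h

end CompressionBase

structure DivisibleUnivGroup (E G : Type u) [AddCommGroup G] [PartialOrder G] where
  EA : EffectAlgebra E
  CB : CompressionBase EA
  divisible : ∀ a : E, ∀ n : ℕ, 0 < n → ∃! x : E, EA.nsmulE n x = some a
  u : G
  φ : E → G
  phi_one : φ EA.one = u
  phi_mem : ∀ a : E, 0 ≤ φ a ∧ φ a ≤ u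
  phi_injective : Function.Injective φ
  phi_surj : ∀ g : G, 0 ≤ g → g ≤ u → ∃ a : E, φ a = g
  padd_eq_some_iff' : ∀ a b c : E,
    EA.padd a b = some c ↔ φ a + φ b ≤ u ∧ φ c = φ a + φ b
  univ : ∀ (H : Type u) [AddCommGroup H], ∀ ψ : E → H,
    (∀ a b c : E, EA.padd a b = some c → ψ c = ψ a + ψ b) →
    ∃! h : G → H, (∀ x y : G, h (x + y) = h x + h y) ∧ ∀ a : E, h (φ a) = ψ a
  Jt : E → G → G
  Jt_spec : ∀ p ∈ CB.P, (∀ x y : G, Jt p (x + y) = Jt p x + Jt p y) ∧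
    (∀ x y : G, x ≤ y → Jt p x ≤ Jt p y) ∧ ∀ a : E, Jt p (φ a) = φ (CB.J p a)

namespace DivisibleUnivGroup

variable {G : Type u} [AddCommGroup G] [PartialOrder G] (S : DivisibleUnivGroup E G)

theorem phi_nonneg (a : E) : 0 ≤ S.φ a := (S.phi_mem a).1

theorem phi_le_u (a : E) : S.φ a ≤ S.u := (S.phi_mem a).2

theorem padd_eq_some_iff {a b c : E} : S.EA.padd a b = some c ↔ S.φ c = S.φ a + S.φ b :=
  ⟨fun h => ((S.padd_eq_some_iff' a b c).mp h).2,
    fun h => (S.padd_eq_some_iff' a b c).mpr ⟨h ▸ S.phi_le_u c, h⟩⟩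

theorem phi_compl (a : E) : S.φ (S.EA.compl a) = S.u - S.φ a := by
  rw [eq_sub_iff_add_eq', ← S.phi_one]
  exact (S.padd_eq_some_iff.mp (S.EA.padd_compl a)).symm

theorem phi_zero : S.φ S.EA.zero = 0 := by
  rw [← S.EA.compl_one, S.phi_compl, S.phi_one, sub_self]

theorem padd_zero (a : E) : S.EA.padd a S.EA.zero = some a :=
  S.padd_eq_some_iff.mpr (by rw [S.phi_zero, add_zero])

theorem zero_padd (a : E) : S.EA.padd S.EA.zero a = some a := by
  rw [S.EA.comm]; exact S.padd_zero a

theorem compl_compl (a : E) : S.EA.compl (S.EA.compl a) = a :=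
  S.phi_injective (by rw [S.phi_compl, S.phi_compl, sub_sub_cancel])

theorem compl_zero : S.EA.compl S.EA.zero = S.EA.one := by
  rw [← S.EA.compl_one, S.compl_compl]

theorem phi_of_nsmulE {n : ℕ} {t b : E} (h : S.EA.nsmulE n t = some b) :
    S.φ b = n • S.φ t := by
  induction n generalizing b with
  | zero =>
    cases h
    rw [S.phi_zero, zero_nsmul]
  | succ n ih =>
    obtain ⟨c, hc, htc⟩ := Option.bind_eq_some_iff.mp h
    rw [S.padd_eq_some_iff.mp htc, ih hc, succ_nsmul']

noncomputable def div (n : ℕ) (a : E) : E :=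
  if h : 0 < n then (S.divisible a n h).exists.choose else a

theorem nsmulE_div {n : ℕ} (hn : 0 < n) (a : E) : S.EA.nsmulE n (S.div n a) = some a := by
  rw [div, dif_pos hn]
  exact (S.divisible a n hn).exists.choose_spec

theorem eq_div {n : ℕ} (hn : 0 < n) {a x : E} (h : S.EA.nsmulE n x = some a) :
    x = S.div n a :=
  (S.divisible a n hn).unique h (S.nsmulE_div hn a)

theorem nsmul_phi_div {n : ℕ} (hn : 0 < n) (a : E) : n • S.φ (S.div n a) = S.φ a :=
  (S.phi_of_nsmulE (S.nsmulE_div hn a)).symm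

noncomputable def half : E := S.div 2 S.EA.one

theorem two_nsmul_phi_half : 2 • S.φ S.half = S.u := by
  rw [half, S.nsmul_phi_div two_pos, S.phi_one]

theorem hom_ext {H : Type u} [AddCommGroup H] {f g : G →+ H}
    (h : ∀ a, f (S.φ a) = g (S.φ a)) : f = g := by
  have hψ : ∀ a b c, S.EA.padd a b = some c → f (S.φ c) = f (S.φ a) + f (S.φ b) :=
    fun a b c hc => by rw [S.padd_eq_some_iff.mp hc, map_add]
  exact DFunLike.ext' ((S.univ H _ hψ).unique ⟨map_add f, fun _ => rfl⟩
    ⟨map_add g, fun a => (h a).symm⟩)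

theorem exists_hom {H : Type u} [AddCommGroup H] (ψ : E → H)
    (hψ : ∀ a b c, S.EA.padd a b = some c → ψ c = ψ a + ψ b) :
    ∃ f : G →+ H, ∀ a, f (S.φ a) = ψ a := by
  obtain ⟨f, ⟨hadd, hf⟩, -⟩ := S.univ H ψ hψ
  exact ⟨AddMonoidHom.mk' f hadd, hf⟩

theorem closure_range_phi : AddSubgroup.closure (Set.range S.φ) = ⊤ := by
  set K := AddSubgroup.closure (Set.range S.φ)
  have h : QuotientAddGroup.mk' K = 0 := S.hom_ext fun a =>
    (QuotientAddGroup.eq_zero_iff _).mpr (AddSubgroup.subset_closure ⟨a, rfl⟩)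
  exact (AddSubgroup.eq_top_iff' K).mpr fun g =>
    (QuotientAddGroup.eq_zero_iff g).mp (DFunLike.congr_fun h g)

section Compression

variable {p : E} (hp : p ∈ S.CB.P)
include hp

def Jhom : G →+ G := AddMonoidHom.mk' (S.Jt p) (S.Jt_spec p hp).1

theorem Jt_mono {x y : G} (h : x ≤ y) : S.Jt p x ≤ S.Jt p y := (S.Jt_spec p hp).2.1 x y h

theorem Jt_phi (a : E) : S.Jt p (S.φ a) = S.φ (S.CB.J p a) := (S.Jt_spec p hp).2.2 a

theorem Jt_zero : S.Jt p 0 = 0 := map_zero (S.Jhom hp)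

theorem Jt_add (x y : G) : S.Jt p (x + y) = S.Jt p x + S.Jt p y := map_add (S.Jhom hp) x y

theorem Jt_sub (x y : G) : S.Jt p (x - y) = S.Jt p x - S.Jt p y := map_sub (S.Jhom hp) x y

theorem Jt_neg (x : G) : S.Jt p (-x) = -S.Jt p x := map_neg (S.Jhom hp) x

theorem Jt_nsmul (n : ℕ) (x : G) : S.Jt p (n • x) = n • S.Jt p x := map_nsmul (S.Jhom hp) n x

theorem Jt_u : S.Jt p S.u = S.φ p := by
  rw [← S.phi_one, S.Jt_phi hp, S.CB.J_one hp]

noncomputable def commutant : AddSubgroup G :=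
  (S.Jhom hp + S.Jhom (S.CB.compl_mem hp) - AddMonoidHom.id G).ker

theorem mem_commutant {g : G} : g ∈ S.commutant hp ↔ inCG S.EA S.Jt g p := by
  change S.Jt p g + S.Jt (S.EA.compl p) g - g = 0 ↔ _
  rw [inCG, sub_eq_zero, eq_comm]

theorem phi_mem_commutant {a : E} : S.φ a ∈ S.commutant hp ↔ inC S.EA S.CB a p := by
  rw [mem_commutant, inCG, inC, S.padd_eq_some_iff, S.Jt_phi hp,
    S.Jt_phi (S.CB.compl_mem hp)]

theorem u_mem_commutant : S.u ∈ S.commutant hp := by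
  rw [mem_commutant, inCG, S.Jt_u hp, S.Jt_u (S.CB.compl_mem hp), S.phi_compl,
    add_sub_cancel]

theorem mem_commutant_compl {g : G} :
    g ∈ S.commutant (S.CB.compl_mem hp) ↔ g ∈ S.commutant hp := by
  rw [mem_commutant, mem_commutant, inCG, inCG, S.compl_compl, add_comm]

theorem Jt_nonneg {x : G} (h : 0 ≤ x) : 0 ≤ S.Jt p x :=
  S.Jt_zero hp ▸ S.Jt_mono hp h

theorem Jt_nonpos {x : G} (h : x ≤ 0) : S.Jt p x ≤ 0 :=
  S.Jt_zero hp ▸ S.Jt_mono hp h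

theorem Jt_le_phi {x : G} (h : x ≤ S.u) : S.Jt p x ≤ S.φ p :=
  S.Jt_u hp ▸ S.Jt_mono hp h

theorem phi_J_le (a : E) : S.φ (S.CB.J p a) ≤ S.φ p :=
  S.Jt_phi hp a ▸ S.Jt_le_phi hp (S.phi_le_u a)

theorem J_zero : S.CB.J p S.EA.zero = S.EA.zero :=
  S.phi_injective (by rw [← S.Jt_phi hp, S.phi_zero, S.Jt_zero hp])

theorem Jt_eq_self_of_nonneg {y : G} (hy : y ∈ S.commutant hp) (h0 : 0 ≤ y)
    (hneg : S.Jt (S.EA.compl p) y ≤ 0) : S.Jt p y = y := by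
  have := (S.mem_commutant hp).mp hy
  rw [inCG, le_antisymm hneg (S.Jt_nonneg (S.CB.compl_mem hp) h0), add_zero] at this
  exact this.symm

end Compression

section Commutation

variable {p q : E}

theorem inC_compl {a : E} (h : inC S.EA S.CB a p) : inC S.EA S.CB a (S.EA.compl p) := by
  rw [inC, S.compl_compl, S.EA.comm]
  exact h

theorem compl_inC (hp : p ∈ S.CB.P) (h : inC S.EA S.CB q p) :
    inC S.EA S.CB (S.EA.compl q) p := by
  rw [← S.phi_mem_commutant hp, S.phi_compl] at *
  exact sub_mem (S.u_mem_commutant hp) h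

theorem mackey_of_le {c : E} (h : S.EA.padd q c = some p) : S.EA.Mackey q p :=
  ⟨S.EA.zero, c, q, c, p, S.zero_padd c, by rw [S.EA.comm]; exact h, S.zero_padd q,
    by rw [S.EA.comm]; exact h⟩

theorem J_comp (hp : p ∈ S.CB.P) (hq : q ∈ S.CB.P) (hm : S.EA.Mackey p q) :
    S.CB.J p q ∈ S.CB.P ∧ S.CB.J p ∘ S.CB.J q = S.CB.J (S.CB.J p q) := by
  obtain ⟨r, hr, hcomp⟩ := S.CB.mackey p hp q hq hm
  have hrpq : S.CB.J p q = r := by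
    simpa [S.CB.J_one hq, S.CB.J_one hr] using congrFun hcomp S.EA.one
  rw [hrpq]
  exact ⟨hr, hcomp⟩

theorem Jt_comp (hp : p ∈ S.CB.P) (hq : q ∈ S.CB.P) (hm : S.EA.Mackey p q) (x : G) :
    S.Jt (S.CB.J p q) x = S.Jt p (S.Jt q x) := by
  obtain ⟨hr, hcomp⟩ := S.J_comp hp hq hm
  have : S.Jhom hr = (S.Jhom hp).comp (S.Jhom hq) := S.hom_ext fun a => by
    change S.Jt _ (S.φ a) = S.Jt p (S.Jt q (S.φ a))
    rw [S.Jt_phi hr, S.Jt_phi hq, S.Jt_phi hp, ← hcomp, Function.comp_apply]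
  exact DFunLike.congr_fun this x

end Commutation

theorem bicommG_subset_bicomm {a : E} {g : G}
    (hg : ∀ q (hq : q ∈ S.CB.P), g ∈ S.commutant hq ↔ inC S.EA S.CB a q) :
    bicommG S.EA S.CB S.Jt S.φ g ⊆ bicomm S.EA S.CB a := by
  rintro p ⟨⟨hp, hpg⟩, hcomm⟩
  refine ⟨⟨hp, (hg p hp).mp ((S.mem_commutant hp).mpr hpg)⟩, fun q hq => ?_⟩
  exact (S.phi_mem_commutant hq.1).mp ((S.mem_commutant hq.1).mpr
    (hcomm q ⟨hq.1, (S.mem_commutant hq.1).mp ((hg q hq.1).mpr hq.2)⟩))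

theorem compl_mem_bicomm {a p : E} (h : p ∈ bicomm S.EA S.CB a) :
    S.EA.compl p ∈ bicomm S.EA S.CB a :=
  ⟨⟨S.CB.compl_mem h.1.1, S.inC_compl h.1.2⟩, fun q hq => S.compl_inC hq.1 (h.2 q hq)⟩

variable [CovariantClass G G (· + ·) (· ≤ ·)]

theorem exists_padd {a b : E} (h : S.φ a + S.φ b ≤ S.u) :
    ∃ c, S.EA.padd a b = some c ∧ S.φ c = S.φ a + S.φ b := by
  obtain ⟨c, hc⟩ := S.phi_surj _ (add_nonneg (S.phi_nonneg a) (S.phi_nonneg b)) h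
  exact ⟨c, S.padd_eq_some_iff.mpr hc, hc⟩

theorem le_iff {a b : E} : S.EA.le a b ↔ S.φ a ≤ S.φ b := by
  constructor
  · rintro ⟨c, hc⟩
    rw [S.padd_eq_some_iff.mp hc]
    exact le_add_of_nonneg_right (S.phi_nonneg c)
  · intro h
    obtain ⟨c, hc⟩ := S.phi_surj (S.φ b - S.φ a) (sub_nonneg.mpr h)
      ((sub_le_self _ (S.phi_nonneg a)).trans (S.phi_le_u b))
    exact ⟨c, S.padd_eq_some_iff.mpr (by rw [hc, add_sub_cancel])⟩

theorem le_one (a : E) : S.EA.le a S.EA.one := S.le_iff.mpr (S.phi_one ▸ S.phi_le_u a)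

theorem le_compl_iff {a b : E} : S.EA.le a (S.EA.compl b) ↔ S.φ a + S.φ b ≤ S.u := by
  rw [S.le_iff, S.phi_compl, le_sub_iff_add_le]

theorem exists_nsmulE {n : ℕ} {t : E} (h : n • S.φ t ≤ S.u) :
    ∃ b, S.EA.nsmulE n t = some b := by
  induction n with
  | zero => exact ⟨_, rfl⟩
  | succ n ih =>
    obtain ⟨c, hc⟩ := ih ((nsmul_le_nsmul_left (S.phi_nonneg t) n.le_succ).trans h)
    obtain ⟨b, hb, -⟩ := S.exists_padd (a := t) (b := c)
      (by rwa [S.phi_of_nsmulE hc, ← succ_nsmul'])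
    exact ⟨b, by rw [nsmulE, hc, Option.bind_some, hb]⟩

section Division

variable {n : ℕ} (hn : 0 < n)
include hn

theorem padd_div {a b c : E} (h : S.EA.padd a b = some c) :
    S.EA.padd (S.div n a) (S.div n b) = some (S.div n c) := by
  set y := S.φ (S.div n a) + S.φ (S.div n b)
  have hy : n • y = S.φ c := by
    rw [nsmul_add, S.nsmul_phi_div hn, S.nsmul_phi_div hn, S.padd_eq_some_iff.mp h]
  have hyn : y ≤ n • y := (one_nsmul y).symm.le.trans
    (nsmul_le_nsmul_left (add_nonneg (S.phi_nonneg _) (S.phi_nonneg _)) hn)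
  obtain ⟨t, ht, hty⟩ := S.exists_padd (hyn.trans (hy ▸ S.phi_le_u c))
  obtain ⟨c', hc'⟩ := S.exists_nsmulE (n := n) (t := t) (by rw [hty, hy]; exact S.phi_le_u c)
  have hcc' : c' = c := S.phi_injective (by rw [S.phi_of_nsmulE hc', hty, hy])
  rw [hcc'] at hc'
  rwa [S.eq_div hn hc'] at ht

theorem phi_div_le (a : E) : S.φ (S.div n a) ≤ S.φ (S.div n S.EA.one) :=
  S.le_iff.mp ⟨_, S.padd_div hn (S.EA.padd_compl a)⟩

include S in
theorem nsmul_injective : Function.Injective (fun x : G => n • x) := by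
  obtain ⟨f, hf⟩ := S.exists_hom (fun a => S.φ (S.div n a))
    fun a b c h => S.padd_eq_some_iff.mp (S.padd_div hn h)
  have hinv : n • f = AddMonoidHom.id G :=
    S.hom_ext fun a => by rw [AddMonoidHom.nsmul_apply, hf, S.nsmul_phi_div hn]; rfl
  have hleft : ∀ x, f (n • x) = x := fun x => by
    rw [map_nsmul]; exact DFunLike.congr_fun hinv x
  intro x y hxy
  rw [← hleft x, ← hleft y]
  exact congrArg f hxy

theorem mem_commutant_of_nsmul {p : E} (hp : p ∈ S.CB.P) {x : G}
    (h : n • x ∈ S.commutant hp) : x ∈ S.commutant hp := by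
  rw [mem_commutant, inCG] at h ⊢
  rw [S.Jt_nsmul hp, S.Jt_nsmul (S.CB.compl_mem hp), ← nsmul_add] at h
  exact S.nsmul_injective hn h

end Division

section Commutation

variable {p q : E}

theorem J_eq_of_mackey_decomp (hp : p ∈ S.CB.P) {a1 b1 c d e : E}
    (h1 : S.EA.padd a1 b1 = some d) (h2 : S.EA.padd d c = some e)
    (h3 : S.EA.padd a1 c = some p) (h4 : S.EA.padd b1 c = some q) :
    S.CB.J p q = c ∧ S.CB.J (S.EA.compl p) q = b1 := by
  have hp' := S.CB.compl_mem hp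
  have hb1 : S.EA.le b1 (S.EA.compl p) := by
    have he := S.phi_le_u e
    rw [S.padd_eq_some_iff.mp h2, S.padd_eq_some_iff.mp h1] at he
    rw [S.le_compl_iff, S.padd_eq_some_iff.mp h3]
    calc _ = S.φ a1 + S.φ b1 + S.φ c := by abel
      _ ≤ S.u := he
  have hc : S.EA.le c p := ⟨a1, by rw [S.EA.comm]; exact h3⟩
  have hc' : S.EA.le c (S.EA.compl (S.EA.compl p)) := by rwa [S.compl_compl]
  have e1 := S.CB.J_padd hp h4
  have e2 := S.CB.J_padd hp' h4
  rw [(S.CB.J_eq_zero_iff hp).mpr hb1, S.CB.J_of_le hp hc, S.zero_padd] at e1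
  rw [S.CB.J_of_le hp' hb1, (S.CB.J_eq_zero_iff hp').mpr hc', S.padd_zero] at e2
  exact ⟨(Option.some_injective _ e1).symm, (Option.some_injective _ e2).symm⟩

theorem inC_of_mackey (hp : p ∈ S.CB.P) (h : S.EA.Mackey p q) : inC S.EA S.CB q p := by
  obtain ⟨a1, b1, c, d, e, h1, h2, h3, h4⟩ := h
  obtain ⟨hJ, hJ'⟩ := S.J_eq_of_mackey_decomp hp h1 h2 h3 h4
  rw [inC, hJ, hJ', S.EA.comm]
  exact h4

theorem exists_mackey_decomp (hp : p ∈ S.CB.P) (h : inC S.EA S.CB q p) :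
    ∃ d e, S.EA.padd (S.CB.J p (S.EA.compl q)) (S.CB.J (S.EA.compl p) q) = some d ∧
      S.EA.padd d (S.CB.J p q) = some e ∧
      S.EA.padd (S.CB.J p (S.EA.compl q)) (S.CB.J p q) = some p ∧
      S.EA.padd (S.CB.J (S.EA.compl p) q) (S.CB.J p q) = some q := by
  have hsplit : S.EA.padd (S.CB.J p (S.EA.compl q)) (S.CB.J p q) = some p := by
    have := S.CB.J_padd hp (S.EA.padd_compl q)
    rwa [S.CB.J_one hp, S.EA.comm] at this
  have hle : S.φ (S.CB.J (S.EA.compl p) q) ≤ S.u - S.φ p :=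
    S.phi_compl p ▸ S.phi_J_le (S.CB.compl_mem hp) q
  obtain ⟨d, hd, hφd⟩ := S.exists_padd
    ((add_le_add (S.phi_J_le hp _) hle).trans_eq (add_sub_cancel _ _))
  obtain ⟨e, he, -⟩ := S.exists_padd (a := d) (b := S.CB.J p q) (by
    rw [hφd, add_right_comm, ← S.padd_eq_some_iff.mp hsplit]
    exact (add_le_add le_rfl hle).trans_eq (add_sub_cancel _ _))
  exact ⟨d, e, hd, he, hsplit, by rw [S.EA.comm]; exact h⟩

theorem mackey_of_inC (hp : p ∈ S.CB.P) (h : inC S.EA S.CB q p) : S.EA.Mackey p q := by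
  obtain ⟨d, e, h1, h2, h3, h4⟩ := S.exists_mackey_decomp hp h
  exact ⟨_, _, _, d, e, h1, h2, h3, h4⟩

theorem inC_comm (hp : p ∈ S.CB.P) (hq : q ∈ S.CB.P) (h : inC S.EA S.CB q p) :
    inC S.EA S.CB p q :=
  S.inC_of_mackey hq (S.mackey_of_inC hp h).symm

theorem J_eq_of_le (hq : q ∈ S.CB.P) {c : E} (h : S.EA.padd q c = some p) :
    S.CB.J q p = q :=
  (S.J_eq_of_mackey_decomp hq (S.zero_padd c) (by rw [S.EA.comm]; exact h) (S.zero_padd q)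
    (by rw [S.EA.comm]; exact h)).1


theorem J_comm (hp : p ∈ S.CB.P) (hq : q ∈ S.CB.P) (hm : S.EA.Mackey p q) :
    S.CB.J p q = S.CB.J q p := by
  obtain ⟨a1, b1, c, d, e, h1, h2, h3, h4⟩ := hm
  rw [(S.J_eq_of_mackey_decomp hp h1 h2 h3 h4).1,
    (S.J_eq_of_mackey_decomp hq (by rw [S.EA.comm]; exact h1) h2 h4 h3).1]

theorem Jt_comm (hp : p ∈ S.CB.P) (hq : q ∈ S.CB.P) (h : inC S.EA S.CB q p) (x : G) :
    S.Jt p (S.Jt q x) = S.Jt q (S.Jt p x) := by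
  have hm := S.mackey_of_inC hp h
  rw [← S.Jt_comp hp hq hm, ← S.Jt_comp hq hp hm.symm, S.J_comm hp hq hm]

theorem Jt_Jt_of_le (hp : p ∈ S.CB.P) (hq : q ∈ S.CB.P) {c : E}
    (h : S.EA.padd q c = some p) (x : G) : S.Jt q (S.Jt p x) = S.Jt q x := by
  rw [← S.Jt_comp hq hp (S.mackey_of_le h), S.J_eq_of_le hq h]

theorem mem_P_of_padd {p r c : E} (hp : p ∈ S.CB.P) (hr : r ∈ S.CB.P)
    (h : S.EA.padd r c = some p) : c ∈ S.CB.P := by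
  have hφ := S.padd_eq_some_iff.mp h
  obtain ⟨t, ht, hφt⟩ := S.exists_padd (a := r) (b := S.EA.compl p) (by
    rw [S.phi_compl, hφ]
    calc _ = S.u - S.φ c := by abel
      _ ≤ S.u := sub_le_self _ (S.phi_nonneg c))
  have hct : c = S.EA.compl t :=
    S.phi_injective (by rw [S.phi_compl, hφt, S.phi_compl, hφ]; abel)
  exact hct ▸ S.CB.compl_mem (S.CB.padd_mem hr (S.CB.compl_mem hp) ht)

theorem Jt_of_padd {b c d : E} (hb : b ∈ S.CB.P) (hc : c ∈ S.CB.P)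
    (hd : S.EA.padd b c = some d) {x : G} (hx : x ∈ S.commutant hb) :
    S.Jt d x = S.Jt b x + S.Jt c x := by
  have hdP := S.CB.padd_mem hb hc hd
  have hmb : S.EA.Mackey d b := (S.mackey_of_le hd).symm
  have hmb' : S.EA.Mackey d (S.EA.compl b) :=
    S.mackey_of_inC hdP (S.compl_inC hdP (S.inC_of_mackey hdP hmb))
  have hJb' : S.CB.J d (S.EA.compl b) = c := S.phi_injective (by
    rw [← S.Jt_phi hdP, S.phi_compl, S.Jt_sub hdP, S.Jt_u hdP, S.Jt_phi hdP,
      S.CB.J_of_le hdP ⟨c, hd⟩, S.padd_eq_some_iff.mp hd, add_sub_cancel_left])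
  rw [mem_commutant, inCG] at hx
  conv_lhs => rw [hx]
  rw [S.Jt_add hdP, ← S.Jt_comp hdP hb hmb, ← S.Jt_comp hdP (S.CB.compl_mem hb) hmb',
    S.CB.J_of_le hdP ⟨c, hd⟩, hJb']

theorem inC_of_padd {a b c d : E} (hb : b ∈ S.CB.P) (hc : c ∈ S.CB.P)
    (hd : S.EA.padd b c = some d) (hab : inC S.EA S.CB a b) (hac : inC S.EA S.CB a c) :
    inC S.EA S.CB a d := by
  have hdP := S.CB.padd_mem hb hc hd
  have hbd' : S.EA.padd b (S.EA.compl d) = some (S.EA.compl c) := S.padd_eq_some_iff.mpr (by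
    rw [S.phi_compl, S.phi_compl, S.padd_eq_some_iff.mp hd]; abel)
  rw [← S.phi_mem_commutant hb] at hab
  rw [← S.phi_mem_commutant hc, mem_commutant, inCG] at hac
  rw [← S.phi_mem_commutant hdP, mem_commutant, inCG, S.Jt_of_padd hb hc hd hab]
  calc S.φ a = S.Jt c (S.φ a) + S.Jt (S.EA.compl c) (S.φ a) := hac
    _ = _ := by rw [S.Jt_of_padd hb (S.CB.compl_mem hdP) hbd' hab]; abel

theorem inC_J {a : E} (hp : p ∈ S.CB.P) (hq : q ∈ S.CB.P) (hm : S.EA.Mackey p q)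
    (hap : inC S.EA S.CB a p) (haq : inC S.EA S.CB a q) : inC S.EA S.CB a (S.CB.J p q) := by
  have hm' : S.EA.Mackey p (S.EA.compl q) :=
    S.mackey_of_inC hp (S.compl_inC hp (S.inC_of_mackey hp hm))
  have hs := (S.J_comp hp (S.CB.compl_mem hq) hm').1
  have hsplit : S.EA.padd (S.EA.compl p) (S.CB.J p (S.EA.compl q))
      = some (S.EA.compl (S.CB.J p q)) := by
    have := S.CB.J_padd hp (S.EA.padd_compl q)
    rw [S.CB.J_one hp, S.padd_eq_some_iff] at this
    rw [S.padd_eq_some_iff, S.phi_compl, S.phi_compl, this]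
    abel
  have hap' := (S.mem_commutant_compl hp).mpr ((S.phi_mem_commutant hp).mpr hap)
  rw [← S.phi_mem_commutant hp, mem_commutant, inCG] at hap
  rw [← S.phi_mem_commutant hq, mem_commutant, inCG] at haq
  rw [← S.phi_mem_commutant (S.J_comp hp hq hm).1, mem_commutant, inCG,
    S.Jt_of_padd (S.CB.compl_mem hp) hs hsplit hap', S.Jt_comp hp hq hm,
    S.Jt_comp hp (S.CB.compl_mem hq) hm']
  calc S.φ a = S.Jt p (S.φ a) + S.Jt (S.EA.compl p) (S.φ a) := hap
    _ = S.Jt p (S.Jt q (S.φ a) + S.Jt (S.EA.compl q) (S.φ a))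
        + S.Jt (S.EA.compl p) (S.φ a) := by rw [← haq]
    _ = _ := by rw [S.Jt_add hp]; abel

theorem Jt_mem_commutant (hp : p ∈ S.CB.P) (hq : q ∈ S.CB.P) (hpq : inC S.EA S.CB p q)
    {y : G} (hy : y ∈ S.commutant hq) : S.Jt p y ∈ S.commutant hq := by
  rw [mem_commutant, inCG] at hy ⊢
  rw [S.Jt_comm hq hp hpq, S.Jt_comm (S.CB.compl_mem hq) hp (S.inC_compl hpq),
    ← S.Jt_add hp, ← hy]

end Commutation

theorem zero_mem_bicomm (a : E) : S.EA.zero ∈ bicomm S.EA S.CB a := by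
  refine ⟨⟨S.CB.zero_mem, ?_⟩, fun q hq => ?_⟩
  · rw [inC, S.compl_zero, (S.CB.J_eq_zero_iff S.CB.zero_mem).mpr (S.compl_zero ▸ S.le_one a),
      S.CB.J_of_le S.CB.one_mem (S.le_one a)]
    exact S.zero_padd a
  · rw [inC, S.J_zero hq.1, S.J_zero (S.CB.compl_mem hq.1)]
    exact S.padd_zero _


theorem one_mem_bicomm (a : E) : S.EA.one ∈ bicomm S.EA S.CB a :=
  S.compl_zero ▸ S.compl_mem_bicomm (S.zero_mem_bicomm a)

theorem padd_mem_bicomm {a p r s : E} (hp : p ∈ bicomm S.EA S.CB a)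
    (hr : r ∈ bicomm S.EA S.CB a) (hs : S.EA.padd p r = some s) : s ∈ bicomm S.EA S.CB a := by
  refine ⟨⟨S.CB.padd_mem hp.1.1 hr.1.1 hs, S.inC_of_padd hp.1.1 hr.1.1 hs hp.1.2 hr.1.2⟩,
    fun q hq => ?_⟩
  rw [← S.phi_mem_commutant hq.1, S.padd_eq_some_iff.mp hs]
  exact add_mem ((S.phi_mem_commutant hq.1).mpr (hp.2 q hq))
    ((S.phi_mem_commutant hq.1).mpr (hr.2 q hq))

theorem J_mem_bicomm {a p r : E} (hp : p ∈ bicomm S.EA S.CB a)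
    (hr : r ∈ bicomm S.EA S.CB a) : S.CB.J p r ∈ bicomm S.EA S.CB a := by
  have hm : S.EA.Mackey p r := S.mackey_of_inC hp.1.1 (hr.2 p hp.1)
  refine ⟨⟨(S.J_comp hp.1.1 hr.1.1 hm).1, S.inC_J hp.1.1 hr.1.1 hm hp.1.2 hr.1.2⟩,
    fun q hq => ?_⟩
  rw [← S.phi_mem_commutant hq.1, ← S.Jt_phi hp.1.1]
  exact S.Jt_mem_commutant hp.1.1 hq.1 (hp.2 q hq) ((S.phi_mem_commutant hq.1).mpr (hr.2 q hq))

theorem booleanSub_bicomm (a : E) : BooleanSub S.EA S.CB (bicomm S.EA S.CB a) := by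
  refine ⟨fun p hp => hp.1.1, ⟨S.zero_mem_bicomm a, S.one_mem_bicomm a,
    fun p hp => S.compl_mem_bicomm hp, fun p hp r hr s hs => S.padd_mem_bicomm hp hr hs⟩,
    fun p hp q hq => ?_⟩
  obtain ⟨d, e, h1, h2, h3, h4⟩ := S.exists_mackey_decomp hp.1.1 (hq.2 p hp.1)
  exact ⟨_, S.J_mem_bicomm hp (S.compl_mem_bicomm hq), _,
    S.J_mem_bicomm (S.compl_mem_bicomm hp) hq, _, S.J_mem_bicomm hp hq, d, e, h1, h2, h3, h4⟩

theorem inC_half {q : E} (hq : q ∈ S.CB.P) : inC S.EA S.CB S.half q := by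
  rw [← S.phi_mem_commutant hq]
  exact S.mem_commutant_of_nsmul two_pos hq (S.two_nsmul_phi_half ▸ S.u_mem_commutant hq)

theorem exists_nsmul_phi_eq_add {n m : ℕ} (hN : 0 < n + m) (e f : E) :
    ∃ z, (n + m) • S.φ z = n • S.φ e + m • S.φ f := by
  obtain ⟨z, hz⟩ := S.phi_surj (n • S.φ (S.div (n + m) e) + m • S.φ (S.div (n + m) f))
    (add_nonneg (nsmul_nonneg (S.phi_nonneg _) n) (nsmul_nonneg (S.phi_nonneg _) m))
    (calc _ ≤ n • S.φ (S.div (n + m) S.EA.one) + m • S.φ (S.div (n + m) S.EA.one) :=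
          add_le_add (nsmul_le_nsmul_right (S.phi_div_le hN e) n)
            (nsmul_le_nsmul_right (S.phi_div_le hN f) m)
      _ = S.u := by rw [← add_nsmul, S.nsmul_phi_div hN, S.phi_one])
  refine ⟨z, ?_⟩
  rw [hz, nsmul_add, smul_comm (n + m) n, smul_comm (n + m) m, S.nsmul_phi_div hN,
    S.nsmul_phi_div hN]

theorem exists_eq_nsmul_sub_half (g : G) :
    ∃ n : ℕ, 0 < n ∧ ∃ e : E, g = n • (S.φ e - S.φ S.half) := by
  have hg : g ∈ AddSubgroup.closure (Set.range S.φ) :=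
    S.closure_range_phi ▸ AddSubgroup.mem_top g
  induction hg using AddSubgroup.closure_induction with
  | mem x hx =>
    obtain ⟨a, rfl⟩ := hx
    obtain ⟨e, -, he⟩ := S.exists_padd (a := S.div 2 a) (b := S.half)
      ((add_le_add_left (S.phi_div_le two_pos a) _).trans_eq
        (by rw [← half, ← two_nsmul, S.two_nsmul_phi_half]))
    exact ⟨2, two_pos, e, by rw [he, add_sub_cancel_right, S.nsmul_phi_div two_pos]⟩
  | zero => exact ⟨1, one_pos, S.half, by rw [sub_self, smul_zero]⟩
  | add x y _ _ hx hy =>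
    obtain ⟨n, hn, e, rfl⟩ := hx
    obtain ⟨m, hm, f, rfl⟩ := hy
    obtain ⟨z, hz⟩ := S.exists_nsmul_phi_eq_add (n := n) (m := m) (by omega) e f
    refine ⟨n + m, by omega, z, ?_⟩
    simp only [nsmul_sub, hz, add_nsmul]
    abel
  | neg x _ hx =>
    obtain ⟨n, hn, e, rfl⟩ := hx
    refine ⟨n, hn, S.EA.compl e, ?_⟩
    rw [← smul_neg, S.phi_compl, ← S.two_nsmul_phi_half, two_nsmul]
    congr 1
    abel

theorem genCompG_of_bComparability (hbc : BComparability S.EA S.CB) :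
    GenCompG S.EA S.CB S.Jt S.φ := by
  intro g
  obtain ⟨n, hn, e, rfl⟩ := S.exists_eq_nsmul_sub_half g
  have hg : ∀ q (hq : q ∈ S.CB.P),
      n • (S.φ e - S.φ S.half) ∈ S.commutant hq ↔ inC S.EA S.CB e q := fun q hq => by
    have hh := (S.phi_mem_commutant hq).mpr (S.inC_half hq)
    rw [← S.phi_mem_commutant hq]
    exact ⟨fun h => by simpa using add_mem (S.mem_commutant_of_nsmul hn hq h) hh,
      fun h => nsmul_mem (sub_mem h hh) n⟩
  have hcomm : CommuteEl S.EA S.CB S.half e := fun p hp q hq =>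
    (S.mackey_of_inC hq.1.1 (hp.2 q ⟨hq.1.1, S.inC_half hq.1.1⟩)).symm
  obtain ⟨p, ⟨hp, hall⟩, hle, hle'⟩ := hbc.2 S.half e hcomm
  have hp' := S.CB.compl_mem hp
  refine ⟨p, ⟨⟨hp, (S.mem_commutant hp).mp ((hg p hp).mpr (hall e (Or.inr (by simp))))⟩,
    fun q hq => ?_⟩, ?_, ?_⟩
  · have hqp : inC S.EA S.CB q p := hall q (Or.inl ⟨hq.1, by
      rintro x (rfl | rfl)
      exacts [S.inC_half hq.1, (hg q hq.1).mp ((S.mem_commutant hq.1).mpr hq.2)]⟩)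
    exact (S.mem_commutant hq.1).mp ((S.phi_mem_commutant hq.1).mpr (S.inC_comm hp hq.1 hqp))
  · rw [S.Jt_nsmul hp', S.Jt_sub hp', S.Jt_phi hp', S.Jt_phi hp']
    exact nsmul_nonpos (sub_nonpos.mpr (S.le_iff.mp hle')) n
  · rw [S.Jt_nsmul hp, S.Jt_sub hp, S.Jt_phi hp, S.Jt_phi hp]
    exact nsmul_nonneg (sub_nonneg.mpr (S.le_iff.mp hle)) n

theorem eq_zero_of_nonneg_of_nsmul_le (harch : S.EA.ArchimedeanEA) {z : G} (h0 : 0 ≤ z)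
    (h : ∀ m : ℕ, m • z ≤ S.u) : z = 0 := by
  obtain ⟨b, rfl⟩ := S.phi_surj z h0 (by simpa using h 1)
  rw [harch b fun m => S.exists_nsmulE (h m), S.phi_zero]

theorem eq_zero_of_forall_nsmul_le (hgc : GenCompG S.EA S.CB S.Jt S.φ)
    (harch : S.EA.ArchimedeanEA) {z : G} (h : ∀ m : ℕ, m • z ≤ S.u ∧ m • -z ≤ S.u) :
    z = 0 := by
  obtain ⟨p, ⟨⟨hp, hz⟩, -⟩, hneg, hpos⟩ := hgc z
  have hp' := S.CB.compl_mem hp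
  have h1 : S.Jt p z = 0 := S.eq_zero_of_nonneg_of_nsmul_le harch hpos fun m => by
    rw [← S.Jt_nsmul hp]
    exact (S.Jt_le_phi hp (h m).1).trans (S.phi_le_u p)
  have h2 : -S.Jt (S.EA.compl p) z = 0 :=
    S.eq_zero_of_nonneg_of_nsmul_le harch (neg_nonneg.mpr hneg) fun m => by
      rw [← S.Jt_neg hp', ← S.Jt_nsmul hp']
      exact (S.Jt_le_phi hp' (h m).2).trans (S.phi_le_u _)
  rw [hz, h1, neg_eq_zero.mp h2, add_zero]

theorem le_of_levels {p r : E} (hp : p ∈ S.CB.P) (hr : r ∈ S.CB.P)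
    (hrp : inC S.EA S.CB r p) {g : G} (hneg : S.Jt (S.EA.compl p) g ≤ 0)
    (hpos : 0 ≤ S.Jt r (g - S.u)) : S.EA.le r p := by
  have hp' := S.CB.compl_mem hp
  have hm : S.EA.Mackey (S.EA.compl p) r := S.mackey_of_inC hp' (S.inC_compl hrp)
  have hs := (S.J_comp hp' hr hm).1
  have h1 : S.Jt (S.CB.J (S.EA.compl p) r) g ≤ 0 := by
    rw [S.Jt_comp hp' hr hm, S.Jt_comm hp' hr (S.inC_compl hrp)]
    exact S.Jt_nonpos hr hneg
  have h2 : 0 ≤ S.Jt (S.CB.J (S.EA.compl p) r) (g - S.u) := by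
    rw [S.Jt_comp hp' hr hm]
    exact S.Jt_nonneg hp' hpos
  -- `s = J_{p'} r` has `J̃_s g ≤ 0 ≤ J̃_s (g - u)`, hence `φ s = J̃_s u ≤ 0`.
  have hzero : S.CB.J (S.EA.compl p) r = S.EA.zero := by
    refine S.phi_injective (le_antisymm ?_ (S.phi_zero ▸ S.phi_nonneg _))
    calc S.φ (S.CB.J (S.EA.compl p) r)
        = S.Jt (S.CB.J (S.EA.compl p) r) g - S.Jt (S.CB.J (S.EA.compl p) r) (g - S.u) := by
          rw [S.Jt_sub hs, S.Jt_u hs, sub_sub_cancel]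
      _ ≤ S.φ S.EA.zero := S.phi_zero ▸ sub_nonpos.mpr (h1.trans h2)
  simpa [S.compl_compl] using (S.CB.J_eq_zero_iff hp').mp hzero

theorem level_step {p r : E} (hp : p ∈ S.CB.P) (hr : r ∈ S.CB.P) (hrp : inC S.EA S.CB r p)
    {y : G} (hy : y ∈ S.commutant hr) (k : ℕ)
    (hneg : S.Jt (S.EA.compl p) (y - k • S.u) ≤ 0) (hpos : 0 ≤ S.Jt p (y - k • S.u))
    (hneg' : S.Jt (S.EA.compl r) (y - (k + 1) • S.u) ≤ 0)
    (hpos' : 0 ≤ S.Jt r (y - (k + 1) • S.u)) :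
    k • (S.φ p - S.φ r) ≤ S.Jt p y - S.Jt r y ∧
      S.Jt p y - S.Jt r y ≤ (k + 1) • (S.φ p - S.φ r) := by
  rw [succ_nsmul, ← sub_sub] at hpos'
  obtain ⟨c, hc⟩ := S.le_of_levels hp hr hrp hneg hpos'
  have hcP := S.mem_P_of_padd hp hr hc
  have hφ := S.padd_eq_some_iff.mp hc
  -- `c = p ⊖ r` lies below `p` and below `r'`, so `J̃_c` inherits a sign condition from each.
  have hcp : 0 ≤ S.Jt c (y - k • S.u) := by
    rw [← S.Jt_Jt_of_le hp hcP (c := r) (by rw [S.EA.comm]; exact hc)]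
    exact S.Jt_nonneg hcP hpos
  have hcr : S.Jt c (y - (k + 1) • S.u) ≤ 0 := by
    have hcr' : S.EA.padd c (S.EA.compl p) = some (S.EA.compl r) :=
      S.padd_eq_some_iff.mpr (by rw [S.phi_compl, S.phi_compl, hφ]; abel)
    rw [← S.Jt_Jt_of_le (S.CB.compl_mem hr) hcP hcr']
    exact S.Jt_nonpos hcP hneg'
  rw [S.Jt_sub hcP, S.Jt_nsmul hcP, S.Jt_u hcP, sub_nonneg] at hcp
  rw [S.Jt_sub hcP, S.Jt_nsmul hcP, S.Jt_u hcP, sub_nonpos] at hcr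
  rw [S.Jt_of_padd hr hcP hc hy, hφ, add_sub_cancel_left, add_sub_cancel_left]
  exact ⟨hcp, hcr⟩

theorem nsmul_phi_sub_mem_commutant_iff {a q : E} (hq : q ∈ S.CB.P) {m : ℕ} (hm : 0 < m)
    (k : ℕ) : m • S.φ a - k • S.u ∈ S.commutant hq ↔ inC S.EA S.CB a q := by
  rw [sub_eq_add_neg, add_mem_cancel_right (neg_mem (nsmul_mem (S.u_mem_commutant hq) k)),
    ← S.phi_mem_commutant hq]
  exact ⟨S.mem_commutant_of_nsmul hm hq, fun h => nsmul_mem h m⟩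

theorem exists_sandwich (hgc : GenCompG S.EA S.CB S.Jt S.φ) (a : E) {m : ℕ} (hm : 0 < m) :
    ∃ s t : G, s ∈ AddSubgroup.closure (S.φ '' bicomm S.EA S.CB a) ∧
      t ∈ AddSubgroup.closure (S.φ '' bicomm S.EA S.CB a) ∧
      s ≤ m • S.φ a ∧ m • S.φ a ≤ t ∧ t - s ≤ S.u := by
  set y := m • S.φ a
  have hlevel : ∀ k : ℕ, ∃ p ∈ bicomm S.EA S.CB a,
      S.Jt (S.EA.compl p) (y - k • S.u) ≤ 0 ∧ 0 ≤ S.Jt p (y - k • S.u) := fun k => by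
    obtain ⟨p, hp, hneg, hpos⟩ := hgc (y - k • S.u)
    exact ⟨p, S.bicommG_subset_bicomm (fun q hq => S.nsmul_phi_sub_mem_commutant_iff hq hm k) hp,
      hneg, hpos⟩
  choose p hpb hneg hpos using hlevel
  have hP : ∀ k, p k ∈ S.CB.P := fun k => (hpb k).1.1
  have hy : ∀ k, y ∈ S.commutant (hP k) := fun k =>
    nsmul_mem ((S.phi_mem_commutant (hP k)).mpr (hpb k).1.2) m
  obtain ⟨hlow, hup⟩ := abel_summation_bounds (fun k => S.Jt (p k) y) (fun k => S.φ (p k)) m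
    fun k _ => S.level_step (hP k) (hP (k + 1)) ((hpb (k + 1)).2 (p k) (hpb k).1) (hy (k + 1)) k
      (hneg k) (hpos k) (hneg (k + 1)) (hpos (k + 1))
  have hT0 : S.Jt (p 0) y = y := S.Jt_eq_self_of_nonneg (hP 0) (hy 0)
    (nsmul_nonneg (S.phi_nonneg a) m) (by simpa using hneg 0)
  have hTm : S.Jt (p m) y - m • S.φ (p m) = 0 := by
    rw [← S.Jt_u (hP m), ← S.Jt_nsmul (hP m), ← S.Jt_sub (hP m)]
    exact le_antisymm (S.Jt_nonpos (hP m)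
      (sub_nonpos.mpr (nsmul_le_nsmul_right (S.phi_le_u a) m))) (hpos m)
  rw [hT0, hTm, add_zero] at hlow hup
  refine ⟨_, _, AddSubgroup.sum_mem _ fun j _ => AddSubgroup.subset_closure ⟨p (j + 1), hpb _, rfl⟩,
    AddSubgroup.sum_mem _ fun j _ => AddSubgroup.subset_closure ⟨p j, hpb _, rfl⟩, hlow, hup, ?_⟩
  rw [← Finset.sum_sub_distrib, Finset.sum_range_sub' (fun j => S.φ (p j))]
  exact (sub_le_self _ (S.phi_nonneg _)).trans (S.phi_le_u _)

theorem inC_of_forall_bicomm (hgc : GenCompG S.EA S.CB S.Jt S.φ) (harch : S.EA.ArchimedeanEA)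
    {a q : E} (hq : q ∈ S.CB.P) (h : ∀ b ∈ bicomm S.EA S.CB a, inC S.EA S.CB b q) :
    inC S.EA S.CB a q := by
  have hq' := S.CB.compl_mem hq
  set D : G →+ G := S.Jhom hq + S.Jhom hq'
  have hD : ∀ x, D x = S.Jt q x + S.Jt (S.EA.compl q) x := fun x => rfl
  have hDfix : ∀ x ∈ AddSubgroup.closure (S.φ '' bicomm S.EA S.CB a), D x = x := by
    have hle : AddSubgroup.closure (S.φ '' bicomm S.EA S.CB a) ≤ S.commutant hq :=
      (AddSubgroup.closure_le _).mpr (by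
        rintro _ ⟨b, hb, rfl⟩
        exact (S.phi_mem_commutant hq).mpr (h b hb))
    exact fun x hx => ((S.mem_commutant hq).mp (hle hx)).symm
  have hDmono : Monotone D := fun x y hxy => add_le_add (S.Jt_mono hq hxy) (S.Jt_mono hq' hxy)
  have hz : D (S.φ a) - S.φ a = 0 := S.eq_zero_of_forall_nsmul_le hgc harch fun m => by
    rcases m.eq_zero_or_pos with rfl | hm
    · simpa [← S.phi_one] using S.phi_nonneg _
    obtain ⟨s, t, hs, ht, hsx, hxt, hts⟩ := S.exists_sandwich hgc a hm
    have h1 : m • D (S.φ a) ≤ t := map_nsmul D m (S.φ a) ▸ hDfix t ht ▸ hDmono hxt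
    have h2 : s ≤ m • D (S.φ a) := map_nsmul D m (S.φ a) ▸ hDfix s hs ▸ hDmono hsx
    constructor
    · calc m • (D (S.φ a) - S.φ a) = m • D (S.φ a) - m • S.φ a := nsmul_sub _ _ _
        _ ≤ t - s := sub_le_sub h1 hsx
        _ ≤ S.u := hts
    · calc m • -(D (S.φ a) - S.φ a) = m • S.φ a - m • D (S.φ a) := by rw [neg_sub, nsmul_sub]
        _ ≤ t - s := sub_le_sub hxt h2
        _ ≤ S.u := hts
  rw [← S.phi_mem_commutant hq, S.mem_commutant hq, inCG, ← hD]
  exact (sub_eq_zero.mp hz).symm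

theorem isBElementWith_bicomm (hgc : GenCompG S.EA S.CB S.Jt S.φ)
    (harch : S.EA.ArchimedeanEA) (a : E) : IsBElementWith S.EA S.CB a (bicomm S.EA S.CB a) :=
  ⟨S.booleanSub_bicomm a, fun _ hp =>
    ⟨fun hap _ hb => hb.2 _ ⟨hp, hap⟩, S.inC_of_forall_bicomm hgc harch hp⟩⟩

theorem inC_of_mem_bicommG_sub {e f p x : E}
    (hp : p ∈ bicommG S.EA S.CB S.Jt S.φ (S.φ f - S.φ e)) (hx : x ∈ S.CB.P)
    (hex : inC S.EA S.CB e x) (hfx : inC S.EA S.CB f x) : inC S.EA S.CB x p := by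
  rw [← S.phi_mem_commutant hx] at hex hfx
  have hx' : p ∈ S.CB.P ∧ inCG S.EA S.Jt (S.φ p) x :=
    ⟨hp.1.1, hp.2 x ⟨hx, (S.mem_commutant hx).mp (sub_mem hfx hex)⟩⟩
  exact S.inC_comm hx hx'.1 ((S.phi_mem_commutant hx).mp ((S.mem_commutant hx).mpr hx'.2))

theorem bComparability_of_genCompG (harch : S.EA.ArchimedeanEA)
    (hgc : GenCompG S.EA S.CB S.Jt S.φ) : BComparability S.EA S.CB := by
  have hb := S.isBElementWith_bicomm hgc harch
  refine ⟨fun a => ⟨_, hb a⟩, fun e f hef => ?_⟩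
  obtain ⟨p, ⟨⟨hp, hpg⟩, hbic⟩, hneg, hpos⟩ := hgc (S.φ f - S.φ e)
  have hp' := S.CB.compl_mem hp
  have hcomm : ∀ x ∈ S.CB.P, inC S.EA S.CB e x → inC S.EA S.CB f x → inC S.EA S.CB x p :=
    fun x hx => S.inC_of_mem_bicommG_sub ⟨⟨hp, hpg⟩, hbic⟩ hx
  have hfb : ∀ b ∈ bicomm S.EA S.CB e, inC S.EA S.CB f b := fun b hbe =>
    ((hb f).2 b hbe.1.1).mpr fun c hc => S.inC_of_mackey hbe.1.1 (hef b hbe c hc)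
  have hec : ∀ c ∈ bicomm S.EA S.CB f, inC S.EA S.CB e c := fun c hc =>
    ((hb e).2 c hc.1.1).mpr fun b hbe => S.inC_of_mackey hc.1.1 (hef b hbe c hc).symm
  have hep : inC S.EA S.CB e p :=
    ((hb e).2 p hp).mpr fun b hbe => hcomm b hbe.1.1 hbe.1.2 (hfb b hbe)
  have hfp : inC S.EA S.CB f p :=
    ((hb f).2 p hp).mpr fun c hc => hcomm c hc.1.1 (hec c hc) hc.1.2
  refine ⟨p, ⟨hp, ?_⟩, ?_, ?_⟩
  · rintro x (⟨hx, hxef⟩ | rfl | rfl)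
    · exact hcomm x hx (hxef e (by simp)) (hxef f (by simp))
    · exact hep
    · exact hfp
  · rw [S.le_iff, ← S.Jt_phi hp, ← S.Jt_phi hp, ← sub_nonneg, ← S.Jt_sub hp]
    exact hpos
  · rw [S.le_iff, ← S.Jt_phi hp', ← S.Jt_phi hp', ← sub_nonpos, ← S.Jt_sub hp']
    exact hneg

end DivisibleUnivGroup

end EffectAlgebra

open EffectAlgebra in
theorem statement17_general {E : Type u} (EA : EffectAlgebra E) (CB : CompressionBase EA)
    (hdiv : ∀ a : E, ∀ n : ℕ, 0 < n → ∃! x : E, EA.nsmulE n x = some a)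
    {G : Type u} [AddCommGroup G] [PartialOrder G]
    [CovariantClass G G (· + ·) (· ≤ ·)]
    (u : G) (φ : E → G)
    (hφ1 : φ EA.one = u)
    (hmem : ∀ a : E, 0 ≤ φ a ∧ φ a ≤ u)
    (hinj : Function.Injective φ)
    (hsurj : ∀ g : G, 0 ≤ g → g ≤ u → ∃ a : E, φ a = g)
    (hpadd : ∀ a b : E, ∀ c : E,
      (EA.padd a b = some c ↔ φ a + φ b ≤ u ∧ φ c = φ a + φ b))
    (huniv : ∀ (H : Type u) [AddCommGroup H], ∀ ψ : E → H,
      (∀ a b c : E, EA.padd a b = some c → ψ c = ψ a + ψ b) →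
      ∃! h : G → H, (∀ x y : G, h (x + y) = h x + h y) ∧ ∀ a : E, h (φ a) = ψ a)
    (Jt : E → G → G)
    (hJt : ∀ p ∈ CB.P, (∀ x y : G, Jt p (x + y) = Jt p x + Jt p y) ∧
      (∀ x y : G, x ≤ y → Jt p x ≤ Jt p y) ∧
      ∀ a : E, Jt p (φ a) = φ (CB.J p a))
    :
    (BComparability EA CB → GenCompG EA CB Jt φ) ∧
    (EA.ArchimedeanEA → GenCompG EA CB Jt φ → BComparability EA CB) := by
  let S : DivisibleUnivGroup E G :=
    ⟨EA, CB, hdiv, u, φ, hφ1, hmem, hinj, hsurj, hpadd, huniv, Jt, hJt⟩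
  exact ⟨S.genCompG_of_bComparability, S.bComparability_of_genCompG⟩

open EffectAlgebra in
/-- for a divisible effect algebra `E` with universal group `(G,u)`
(represented by `φ : E ≅ [0,u]` with the universal extension property) and the uniquely
extended compression base `Jt`: if `E` has the b-comparability property then `G` has
general comparability; conversely, if `E` is archimedean and `G` has general
comparability, then `E` has the b-comparability property. -/
theorem statement17 {E : Type u} (EA : EffectAlgebra E) (CB : CompressionBase EA)
    (hdiv : ∀ a : E, ∀ n : ℕ, 0 < n → ∃! x : E, EA.nsmulE n x = some a)
    {G : Type u} [AddCommGroup G] [PartialOrder G]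
    [CovariantClass G G (· + ·) (· ≤ ·)]
    (u : G) (hu : OrderUnit u) (φ : E → G)
    (hφ1 : φ EA.one = u)
    (hmem : ∀ a : E, 0 ≤ φ a ∧ φ a ≤ u)
    (hinj : Function.Injective φ)
    (hsurj : ∀ g : G, 0 ≤ g → g ≤ u → ∃ a : E, φ a = g)
    (hpadd : ∀ a b : E, ∀ c : E,
      (EA.padd a b = some c ↔ φ a + φ b ≤ u ∧ φ c = φ a + φ b))
    (huniv : ∀ (H : Type u) [AddCommGroup H], ∀ ψ : E → H,
      (∀ a b c : E, EA.padd a b = some c → ψ c = ψ a + ψ b) →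
      ∃! h : G → H, (∀ x y : G, h (x + y) = h x + h y) ∧ ∀ a : E, h (φ a) = ψ a)
    (Jt : E → G → G)
    (hJt : ∀ p ∈ CB.P, (∀ x y : G, Jt p (x + y) = Jt p x + Jt p y) ∧
      (∀ x y : G, x ≤ y → Jt p x ≤ Jt p y) ∧
      ∀ a : E, Jt p (φ a) = φ (CB.J p a))
    :
    (BComparability EA CB → GenCompG EA CB Jt φ) ∧
    (EA.ArchimedeanEA → GenCompG EA CB Jt φ → BComparability EA CB) :=
  statement17_general EA CB hdiv u φ hφ1 hmem hinj hsurj hpadd huniv Jt hJt
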